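/- arXiv:2210.13020 — 3 statements merged into one kernel-verified Lean document; each statement's English description precedes it below -/
import Mathlib

section
/- Let s, t be monotone functions on a complete lattice such that s^* ∘ t^* ≤ t^* ∘ s^* (pointwise). Then (s ⊔ t)^* = t^* ∘ s^*. -/
/-- The least (pre)fixpoint of `y ↦ x ⊔ s y` (Knaster–Tarski); for monotone `s`
this gives the least closure above `s`. -/
def lstar {X : Type*} [CompleteLattice X] (s : X → X) (x : X) : X :=
  sInf {y | x ⊔ s y ≤ y}

/-! A point above `x` that is closed under both `s` and `t` bounds `(s ⊔ t)^* x`. The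
point `t^* (s^* x)` is trivially `t`-closed, and `s`-closed because
`s (t^* s^* x) ≤ s^* t^* (s^* x) ≤ t^* s^* (s^* x) = t^* s^* x`. Conversely
`s^* ≤ (s ⊔ t)^*`, and `t^*` fixes the `t`-closed point `(s ⊔ t)^* x`. -/

section lstar

variable {X : Type*} [CompleteLattice X] {s t : X → X}

theorem lstar_le_of_closed {x y : X} (hxy : x ≤ y) (hy : s y ≤ y) : lstar s x ≤ y :=
  sInf_le (sup_le hxy hy)

theorem lstar_le_self {x : X} (hx : s x ≤ x) : lstar s x ≤ x :=
  lstar_le_of_closed le_rfl hx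

-- `lstar s x` unfolds to `OrderHom.lfp` of `y ↦ x ⊔ s y`.
theorem sup_map_lstar_le (hs : Monotone s) (x : X) : x ⊔ s (lstar s x) ≤ lstar s x :=
  (OrderHom.map_lfp ⟨fun y => x ⊔ s y, fun _ _ h => sup_le_sup_left (hs h) x⟩).le

theorem le_lstar (hs : Monotone s) (x : X) : x ≤ lstar s x :=
  le_sup_left.trans (sup_map_lstar_le hs x)

theorem map_lstar_le (hs : Monotone s) (x : X) : s (lstar s x) ≤ lstar s x :=
  le_sup_right.trans (sup_map_lstar_le hs x)

theorem map_le_lstar (hs : Monotone s) (x : X) : s x ≤ lstar s x :=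
  (hs (le_lstar hs x)).trans (map_lstar_le hs x)

theorem lstar_mono (hs : Monotone s) : Monotone (lstar s) := fun _ y hxy =>
  lstar_le_of_closed (hxy.trans (le_lstar hs y)) (map_lstar_le hs y)

theorem lstar_lstar (hs : Monotone s) (x : X) : lstar s (lstar s x) = lstar s x :=
  (lstar_le_self (map_lstar_le hs x)).antisymm (le_lstar hs _)

theorem lstar_le_lstar_of_le (ht : Monotone t) (hst : s ≤ t) (x : X) :
    lstar s x ≤ lstar t x :=
  lstar_le_of_closed (le_lstar ht x) ((hst _).trans (map_lstar_le ht x))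

end lstar

/-- If `s^* ∘ t^* ≤ t^* ∘ s^*` then `(s ⊔ t)^* = t^* ∘ s^*`. -/
theorem lstar_sup_of_comm {X : Type*} [CompleteLattice X] (s t : X → X)
    (hs : Monotone s) (ht : Monotone t)
    (h : ∀ x, lstar s (lstar t x) ≤ lstar t (lstar s x)) :
    ∀ x, lstar (fun y => s y ⊔ t y) x = lstar t (lstar s x) := by
  intro x
  have hsup : Monotone (s ⊔ t) := hs.sup ht
  change lstar (s ⊔ t) x = _
  apply le_antisymm
  · have hs_closed : s (lstar t (lstar s x)) ≤ lstar t (lstar s x) :=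
      calc s (lstar t (lstar s x)) ≤ lstar s (lstar t (lstar s x)) := map_le_lstar hs _
        _ ≤ lstar t (lstar s (lstar s x)) := h _
        _ = lstar t (lstar s x) := by rw [lstar_lstar hs]
    exact lstar_le_of_closed ((le_lstar hs x).trans (le_lstar ht _))
      (sup_le hs_closed (map_lstar_le ht _))
  · calc lstar t (lstar s x) ≤ lstar t (lstar (s ⊔ t) x) :=
          lstar_mono ht (lstar_le_lstar_of_le hsup le_sup_left x)
      _ ≤ lstar (s ⊔ t) x :=
          lstar_le_self (le_sup_right.trans (map_lstar_le hsup x))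
end

section
/- Let s, f be monotone functions on a complete lattice and c a closure. If s ∘ f ≤ f ∘ c, then s^* ∘ f ≤ f ∘ c. -/
theorem lstar_le_of_sup_le {X : Type*} [CompleteLattice X] {s : X → X} {x y : X}
    (hy : x ⊔ s y ≤ y) : lstar s x ≤ y :=
  sInf_le hy

theorem lstar_comp_le_general {X : Type*} [CompleteLattice X] (s f c : X → X)
    (hf : Monotone f)
    (hc_ext : ∀ x, x ≤ c x) (hc_idem : ∀ x, c (c x) ≤ c x)
    (h : ∀ x, s (f x) ≤ f (c x)) :
    ∀ x, lstar s (f x) ≤ f (c x) := fun x =>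
  lstar_le_of_sup_le <| sup_le (hf (hc_ext x)) ((h (c x)).trans (hf (hc_idem x)))

/-- If `s ∘ f ≤ f ∘ c` for a closure `c`, then `s^* ∘ f ≤ f ∘ c`. -/
theorem lstar_comp_le {X : Type*} [CompleteLattice X] (s f c : X → X)
    (hs : Monotone s) (hf : Monotone f)
    (hc_mono : Monotone c) (hc_ext : ∀ x, x ≤ c x) (hc_idem : ∀ x, c (c x) ≤ c x)
    (h : ∀ x, s (f x) ≤ f (c x)) :
    ∀ x, lstar s (f x) ≤ f (c x) :=
  lstar_comp_le_general s f c hf hc_ext hc_idem h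
end

section
/- In a quantale, if s is a contextual monotone function, then its least closure s^* is contextual. -/
section lstar

variable {α β : Type*} [CompleteLattice α] [CompleteLattice β]

theorem lstar_le {s : α → α} {x y : α} (h : x ⊔ s y ≤ y) : lstar s x ≤ y :=
  sInf_le h

theorem sup_apply_lstar_le {s : α → α} (hs : Monotone s) (x : α) :
    x ⊔ s (lstar s x) ≤ lstar s x :=
  le_sInf fun _ hy => sup_le (le_sup_left.trans hy)
    ((hs (lstar_le hy)).trans (le_sup_right.trans hy))

theorem GaloisConnection.map_lstar_le {f : α → β} {g : β → α} (gc : GaloisConnection f g)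
    {s : α → α} {t : β → β} (ht : Monotone t) (hst : ∀ w, f (s w) ≤ t (f w)) (y : α) :
    f (lstar s y) ≤ lstar t (f y) := by
  have hpre := sup_apply_lstar_le ht (f y)
  refine gc.le_iff_le.mpr (lstar_le (sup_le ?_ ?_))
  · exact gc.le_iff_le.mp (le_sup_left.trans hpre)
  · refine gc.le_iff_le.mp ((hst _).trans ?_)
    exact (ht (gc.l_u_le _)).trans (le_sup_right.trans hpre)

end lstar

namespace Quantale

variable {α : Type*} [Semigroup α] [CompleteLattice α] [IsQuantale α]

theorem gc_mul_left (x : α) : GaloisConnection (x * ·) (x ⇨ᵣ ·) :=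
  fun _ _ => rightMulResiduation_le_iff_mul_le.symm

theorem gc_mul_right (z : α) : GaloisConnection (· * z) (z ⇨ₗ ·) :=
  fun _ _ => leftMulResiduation_le_iff_mul_le.symm

end Quantale

/-- In a quantale (a complete lattice with a monoid multiplication distributing over all
joins), if `s` is a contextual monotone function then its least closure `s^*` is contextual. -/
theorem lstar_contextual {X : Type*} [CompleteLattice X] [Monoid X]
    (hdistl : ∀ (a : X) (S : Set X), a * sSup S = ⨆ b ∈ S, a * b)
    (hdistr : ∀ (a : X) (S : Set X), sSup S * a = ⨆ b ∈ S, b * a)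
    (s : X → X) (hs : Monotone s)
    (hctx : ∀ x y z : X, x * s y * z ≤ s (x * y * z)) :
    ∀ x y z : X, x * lstar s y * z ≤ lstar s (x * y * z) := by
  let : IsQuantale X := ⟨hdistl, fun S a => hdistr a S⟩
  intro x y z
  exact ((Quantale.gc_mul_left x).compose (Quantale.gc_mul_right z)).map_lstar_le hs
    (fun w => hctx x w z) y
end
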